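/- Let V(F,δ) = N·e^{σ²/2} + F·(e^b - e^δ) - P(F,δ)·(e^b - 1). For every F > 0 and δ ∈ ℝ, ∂V/∂δ = -F·e^δ·(1 + (e^b - 1)·Φ(-d₂)) < 0; i.e., the vault's payoff is strictly decreasing in the interest rate δ. -/

import Mathlib

open Real Set

/-- Standard normal density. -/
noncomputable def stdPdf (x : ℝ) : ℝ := (Real.sqrt (2 * Real.pi))⁻¹ * Real.exp (-x ^ 2 / 2)

/-- Standard normal CDF. -/
noncomputable def stdCdf (x : ℝ) : ℝ := ∫ t in Set.Iic x, stdPdf t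

/-- Inverse of the standard normal CDF. -/
noncomputable def stdCdfInv : ℝ → ℝ := Function.invFun stdCdf

noncomputable def d1 (N F σ δ : ℝ) : ℝ := (Real.log (N / (F * Real.exp δ)) + σ ^ 2 / 2) / σ

noncomputable def d2 (N F σ δ : ℝ) : ℝ := d1 N F σ δ - σ

/-- Expected collateral shortfall P(F, δ). -/
noncomputable def Pshort (N σ F δ : ℝ) : ℝ :=
  F * Real.exp δ * stdCdf (-(d2 N F σ δ)) - N * stdCdf (-(d1 N F σ δ))

/-- Vault payoff V(F, δ). -/
noncomputable def Vval (N σ b F δ : ℝ) : ℝ :=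
  N * Real.exp (σ ^ 2 / 2) + F * (Real.exp b - Real.exp δ)
    - Pshort N σ F δ * (Real.exp b - 1)

/-- Unconstrained optimal issuance φ(δ). -/
noncomputable def phiIss (N σ b δ : ℝ) : ℝ :=
  N * Real.exp (σ * stdCdfInv ((Real.exp (b - δ) - 1) / (Real.exp b - 1)) - δ - σ ^ 2 / 2)

/-!
Differentiating `P` in `δ`, the two terms coming from `Φ(-d₁)` and `Φ(-d₂)` cancel by the
Black–Scholes identity `N φ(d₁) = F e^δ φ(d₂)`, so `∂P/∂δ = F e^δ Φ(-d₂) ≥ 0`. Hence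
`∂V/∂δ = -F e^δ - (e^b - 1) F e^δ Φ(-d₂)`, which is negative because `e^b > 1`.
-/

open MeasureTheory

lemma stdPdf_nonneg (x : ℝ) : 0 ≤ stdPdf x := by
  unfold stdPdf; positivity

lemma stdPdf_neg (x : ℝ) : stdPdf (-x) = stdPdf x := by
  simp [stdPdf]

lemma continuous_stdPdf : Continuous stdPdf := by
  unfold stdPdf; fun_prop

lemma integrable_stdPdf : Integrable stdPdf :=
  ((integrable_exp_neg_mul_sq (by norm_num : (0 : ℝ) < 1 / 2)).const_mul
    (Real.sqrt (2 * Real.pi))⁻¹).congr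
    (Filter.Eventually.of_forall fun x => by simp only [stdPdf]; ring_nf)

lemma stdCdf_nonneg (x : ℝ) : 0 ≤ stdCdf x :=
  setIntegral_nonneg measurableSet_Iic fun t _ => stdPdf_nonneg t

lemma stdCdf_eq_add_intervalIntegral (x : ℝ) :
    stdCdf x = stdCdf 0 + ∫ t in (0 : ℝ)..x, stdPdf t := by
  rw [← intervalIntegral.integral_Iic_sub_Iic integrable_stdPdf.integrableOn
    integrable_stdPdf.integrableOn, stdCdf, stdCdf]
  ring

lemma hasDerivAt_stdCdf (x : ℝ) : HasDerivAt stdCdf (stdPdf x) x := by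
  rw [funext stdCdf_eq_add_intervalIntegral]
  exact (intervalIntegral.integral_hasDerivAt_right integrable_stdPdf.intervalIntegrable
    continuous_stdPdf.aestronglyMeasurable.stronglyMeasurableAtFilter
    continuous_stdPdf.continuousAt).const_add _

lemma mul_stdPdf_d1_eq {N S σ : ℝ} (hN : 0 < N) (hS : 0 < S) (hσ : σ ≠ 0) :
    N * stdPdf ((Real.log (N / S) + σ ^ 2 / 2) / σ)
      = S * stdPdf ((Real.log (N / S) + σ ^ 2 / 2) / σ - σ) := by
  set L := Real.log (N / S)
  have hexp : Real.exp (-L) = S / N := by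
    rw [← Real.log_inv, Real.exp_log (by positivity), inv_div]
  have hsplit : -((L + σ ^ 2 / 2) / σ) ^ 2 / 2 = -((L + σ ^ 2 / 2) / σ - σ) ^ 2 / 2 + -L := by
    field_simp; ring
  rw [stdPdf, stdPdf, hsplit, Real.exp_add, hexp]
  field_simp

lemma d1_eq {N F : ℝ} (σ δ : ℝ) (hN : N ≠ 0) (hF : F ≠ 0) :
    d1 N F σ δ = (Real.log N - Real.log F - δ + σ ^ 2 / 2) / σ := by
  rw [d1, Real.log_div hN (by positivity), Real.log_mul hF (Real.exp_ne_zero δ), Real.log_exp]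
  ring

lemma hasDerivAt_d1 {N F : ℝ} (σ δ : ℝ) (hN : N ≠ 0) (hF : F ≠ 0) :
    HasDerivAt (d1 N F σ) (-σ⁻¹) δ := by
  rw [show d1 N F σ = _ from funext (d1_eq σ · hN hF)]
  simpa [neg_div] using
    ((((hasDerivAt_id δ).const_sub (Real.log N - Real.log F)).add_const (σ ^ 2 / 2)).div_const σ)

lemma hasDerivAt_d2 {N F : ℝ} (σ δ : ℝ) (hN : N ≠ 0) (hF : F ≠ 0) :
    HasDerivAt (d2 N F σ) (-σ⁻¹) δ :=
  (hasDerivAt_d1 σ δ hN hF).sub_const σ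

lemma hasDerivAt_stdCdf_neg_comp {f : ℝ → ℝ} {f' x : ℝ} (hf : HasDerivAt f f' x) :
    HasDerivAt (fun y => stdCdf (-f y)) (-(stdPdf (f x) * f')) x := by
  simpa [stdPdf_neg, Function.comp_def] using (hasDerivAt_stdCdf (-f x)).comp x hf.neg

lemma hasDerivAt_Pshort {N F σ : ℝ} (δ : ℝ) (hN : 0 < N) (hF : 0 < F) (hσ : σ ≠ 0) :
    HasDerivAt (Pshort N σ F) (F * Real.exp δ * stdCdf (-(d2 N F σ δ))) δ := by
  have hΦ1 := hasDerivAt_stdCdf_neg_comp (hasDerivAt_d1 σ δ hN.ne' hF.ne')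
  have hΦ2 := hasDerivAt_stdCdf_neg_comp (hasDerivAt_d2 σ δ hN.ne' hF.ne')
  have hbs : N * stdPdf (d1 N F σ δ) = F * Real.exp δ * stdPdf (d2 N F σ δ) :=
    mul_stdPdf_d1_eq hN (by positivity) hσ
  refine ((((Real.hasDerivAt_exp δ).const_mul F).mul hΦ2).sub (hΦ1.const_mul N)).congr_deriv ?_
  linear_combination -σ⁻¹ * hbs

lemma hasDerivAt_Vval {N F σ : ℝ} (b δ : ℝ) (hN : 0 < N) (hF : 0 < F) (hσ : σ ≠ 0) :
    HasDerivAt (Vval N σ b F)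
      (-(F * Real.exp δ) * (1 + (Real.exp b - 1) * stdCdf (-(d2 N F σ δ)))) δ := by
  refine ((((Real.hasDerivAt_exp δ).const_sub (Real.exp b)).const_mul F).const_add
    (N * Real.exp (σ ^ 2 / 2))).sub
    ((hasDerivAt_Pshort δ hN hF hσ).mul_const (Real.exp b - 1)) |>.congr_deriv ?_
  ring

theorem stmt5 (N σ b F δ : ℝ) (hN : 0 < N) (hF : 0 < F) (hσ : 0 < σ) (hb : 0 < b) :
    HasDerivAt (fun δ' => Vval N σ b F δ')
      (-(F * Real.exp δ) * (1 + (Real.exp b - 1) * stdCdf (-(d2 N F σ δ)))) δ ∧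
    -(F * Real.exp δ) * (1 + (Real.exp b - 1) * stdCdf (-(d2 N F σ δ))) < 0 := by
  refine ⟨hasDerivAt_Vval b δ hN hF hσ.ne', ?_⟩
  have hexpb : 0 < Real.exp b - 1 := sub_pos.mpr (Real.one_lt_exp_iff.mpr hb)
  have hfactor : 0 < 1 + (Real.exp b - 1) * stdCdf (-(d2 N F σ δ)) := by
    have := stdCdf_nonneg (-(d2 N F σ δ))
    positivity
  exact mul_neg_of_neg_of_pos (neg_neg_of_pos (by positivity)) hfactor
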